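/- arXiv:math/9912004 — 2 statements merged into one kernel-verified Lean document; each statement's English description precedes it below -/
import Mathlib

section
/- Let j and k be integers with j ≥ 1 and k ≥ 1. Then j = k if and only if there exist open neighborhoods U and V of 0 in ℂ, a homeomorphism h : U → V with h(0) = 0, and a homeomorphism h' : ℝ → ℝ, such that for all z ∈ U one has Re((h(z))^k) = h'(Re(z^j)). (Equivalently: the functions Re(z^j) and Re(z^k) are topologically equivalent in neighborhoods of their critical point 0 if and only if j = k; by the formula ind₀ Re(z^k) = 1 − k, this says two isolated critical points are locally topologically equivalent if and only if their Poincaré indices coincide.) -/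
open Complex Metric Set

/-- direction of a complex number -/
noncomputable def cdir (z : ℂ) : ℂ := (‖z‖ : ℂ)⁻¹ * z

/-- explicit points on the unit circle with `Re (w ^ k) = 0` -/
noncomputable def wpt (k m : ℕ) : ℂ :=
  Complex.exp ((((2 * m + 1) * Real.pi / (2 * k) : ℝ) : ℂ) * Complex.I)

lemma wpt_norm (k m : ℕ) : ‖wpt k m‖ = 1 := by
  rw [wpt, Complex.norm_exp_ofReal_mul_I]

lemma wpt_ne_zero (k m : ℕ) : wpt k m ≠ 0 := by
  intro h
  have := wpt_norm k m
  rw [h] at this; simp at this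

lemma wpt_pow_re (k m : ℕ) (hk : 1 ≤ k) : ((wpt k m) ^ k).re = 0 := by
  have hk0 : (k : ℂ) ≠ 0 := Nat.cast_ne_zero.mpr (by omega)
  have : (wpt k m) ^ k = Complex.exp ((((m : ℝ) * Real.pi + Real.pi / 2 : ℝ) : ℂ) * Complex.I) := by
    rw [wpt, ← Complex.exp_nat_mul]
    congr 1
    push_cast
    field_simp
  rw [this, Complex.exp_ofReal_mul_I_re, Real.cos_add, Real.cos_pi_div_two,
    Real.sin_pi_div_two, Real.sin_nat_mul_pi]
  ring

lemma wpt_inj (k : ℕ) (hk : 1 ≤ k) {m m' : ℕ} (hm : m < 2 * k) (hm' : m' < 2 * k)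
    (h : wpt k m = wpt k m') : m = m' := by
  rw [wpt, wpt, Complex.exp_eq_exp_iff_exists_int] at h
  obtain ⟨n, hn⟩ := h
  have h2 : (((2 * m + 1) * Real.pi / (2 * k) : ℝ) : ℂ) * Complex.I
      = ((((2 * m' + 1) * Real.pi / (2 * k) + n * (2 * Real.pi) : ℝ)) : ℂ) * Complex.I := by
    rw [hn]; push_cast; ring
  have h3 := mul_right_cancel₀ Complex.I_ne_zero h2
  have h4 : ((2 * m + 1) * Real.pi / (2 * k) : ℝ)
      = (2 * m' + 1) * Real.pi / (2 * k) + n * (2 * Real.pi) := by exact_mod_cast h3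
  have hk0 : (k : ℝ) ≠ 0 := by positivity
  have hπ : (Real.pi : ℝ) ≠ 0 := Real.pi_ne_zero
  have hπpos := Real.pi_pos
  have key : (m : ℝ) = m' + 2 * k * n := by
    have h5 := congrArg (fun x : ℝ => x * (2 * k) / Real.pi) h4
    field_simp at h5
    nlinarith [h5]
  have keyz : (m : ℤ) = m' + 2 * k * n := by exact_mod_cast key
  have hmz : (m : ℤ) < 2 * k := by exact_mod_cast hm
  have hm'z : (m' : ℤ) < 2 * k := by exact_mod_cast hm'
  have hm0 : (0 : ℤ) ≤ m := Int.natCast_nonneg m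
  have hm'0 : (0 : ℤ) ≤ m' := Int.natCast_nonneg m'
  have hkz : (1 : ℤ) ≤ k := by exact_mod_cast hk
  have hn0 : n = 0 := by
    rcases lt_trichotomy n 0 with hn1 | hn1 | hn1
    · exfalso
      have : 2 * (k : ℤ) * n ≤ 2 * k * (-1) :=
        mul_le_mul_of_nonneg_left (by omega) (by positivity)
      linarith
    · exact hn1
    · exfalso
      have : 2 * (k : ℤ) * 1 ≤ 2 * k * n :=
        mul_le_mul_of_nonneg_left (by omega) (by positivity)
      linarith
  rw [hn0] at keyz
  simp at keyz
  exact_mod_cast keyz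

lemma unit_im_sq {c : ℂ} (h1 : ‖c‖ = 1) (h2 : c.re = 0) : c ^ 2 = -1 := by
  have hns : Complex.normSq c = 1 := by
    have h3 : ‖c‖ = 1 := h1
    rw [← Complex.sq_norm, h3, one_pow]
  rw [Complex.normSq_apply, h2] at hns
  apply Complex.ext <;> simp [pow_two, Complex.mul_re, Complex.mul_im, h2] <;> nlinarith

lemma cdir_norm {p : ℂ} (hp : p ≠ 0) : ‖cdir p‖ = 1 := by
  have h1 : ‖p‖ ≠ 0 := by simpa using hp
  rw [cdir, norm_mul, norm_inv, Complex.norm_real, Real.norm_eq_abs,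
    _root_.abs_of_nonneg (norm_nonneg p), inv_mul_cancel₀ h1]

lemma dir_mem_roots {n : ℕ} (hn : 1 ≤ n) {p : ℂ} (hp : p ≠ 0) (hre : (p ^ n).re = 0) :
    (cdir p) ^ (2 * n) = -1 := by
  have hnorm : ‖cdir p‖ = 1 := cdir_norm hp
  have hre' : ((cdir p) ^ n).re = 0 := by
    have : (cdir p) ^ n = ((‖p‖ : ℂ)⁻¹) ^ n * p ^ n := by rw [cdir, mul_pow]
    rw [this, ← Complex.ofReal_inv, ← Complex.ofReal_pow, Complex.re_ofReal_mul, hre, mul_zero]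
  have : (cdir p) ^ (2 * n) = ((cdir p) ^ n) ^ 2 := by rw [← pow_mul, mul_comm]
  rw [this]
  exact unit_im_sq (by rw [norm_pow, hnorm, one_pow]) hre'

lemma roots_finite (n : ℕ) (hn : 1 ≤ n) : {w : ℂ | w ^ (2 * n) = -1}.Finite := by
  have hsub : {w : ℂ | w ^ (2 * n) = -1} ⊆ ↑((Polynomial.nthRoots (2 * n) (-1 : ℂ)).toFinset) := by
    intro w hw
    rw [Finset.mem_coe, Multiset.mem_toFinset, Polynomial.mem_nthRoots (by omega)]
    exact hw
  exact Set.Finite.subset (Finset.finite_toSet _) hsub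

lemma roots_card (n : ℕ) (hn : 1 ≤ n) : {w : ℂ | w ^ (2 * n) = -1}.ncard ≤ 2 * n := by
  have hsub : {w : ℂ | w ^ (2 * n) = -1} ⊆ ↑((Polynomial.nthRoots (2 * n) (-1 : ℂ)).toFinset) := by
    intro w hw
    rw [Finset.mem_coe, Multiset.mem_toFinset, Polynomial.mem_nthRoots (by omega)]
    exact hw
  calc {w : ℂ | w ^ (2 * n) = -1}.ncard ≤ ((Polynomial.nthRoots (2 * n) (-1 : ℂ)).toFinset : Set ℂ).ncard :=
        Set.ncard_le_ncard hsub (Finset.finite_toSet _)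
    _ = (Polynomial.nthRoots (2 * n) (-1 : ℂ)).toFinset.card := by rw [Set.ncard_coe_finset]
    _ ≤ Multiset.card (Polynomial.nthRoots (2 * n) (-1 : ℂ)) := Multiset.toFinset_card_le _
    _ ≤ 2 * n := Polynomial.card_nthRoots _ _

/-- a preconnected subset of a finite set (in a T1 space) is a subsingleton -/
lemma precon_subsingleton {X : Type*} [TopologicalSpace X] [T1Space X] {S F : Set X}
    (hS : IsPreconnected S) (hF : F.Finite) (hSF : S ⊆ F) : S.Subsingleton := by
  intro a ha b hb
  by_contra hne
  have h1 : IsClosed ({a} : Set X) := isClosed_singleton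
  have h2 : IsClosed (F \ {a}) := Set.Finite.isClosed (hF.subset (Set.diff_subset))
  have hcov : S ⊆ {a} ∪ (F \ {a}) := by
    intro x hx
    by_cases hxa : x = a
    · left; exact hxa
    · right; exact ⟨hSF hx, hxa⟩
  have hne1 : (S ∩ {a}).Nonempty := ⟨a, ha, rfl⟩
  have hne2 : (S ∩ (F \ {a})).Nonempty := ⟨b, hb, hSF hb, fun hba => hne hba.symm⟩
  obtain ⟨x, _, hx1, hx2⟩ := isPreconnected_closed_iff.mp hS _ _ h1 h2 hcov hne1 hne2
  exact hx2.2 hx1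

lemma cdir_const_on_precon {n : ℕ} (hn : 1 ≤ n) {S : Set ℂ}
    (hS : IsPreconnected S) (hmem : ∀ z ∈ S, z ≠ 0 ∧ (z ^ n).re = 0)
    {p q : ℂ} (hp : p ∈ S) (hq : q ∈ S) : cdir p = cdir q := by
  have hcont : ContinuousOn cdir S := by
    apply ContinuousOn.mul
    · apply ContinuousOn.inv₀
      · exact Complex.continuous_ofReal.comp continuous_norm |>.continuousOn
      · intro z hz
        simpa using (hmem z hz).1
    · exact continuousOn_id
  have himg : IsPreconnected (cdir '' S) := hS.image _ hcont
  have hsub : cdir '' S ⊆ {w : ℂ | w ^ (2 * n) = -1} := by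
    rintro _ ⟨z, hz, rfl⟩
    exact dir_mem_roots hn (hmem z hz).1 (hmem z hz).2
  have := precon_subsingleton himg (roots_finite n hn) hsub
  exact this ⟨p, hp, rfl⟩ ⟨q, hq, rfl⟩

lemma cdir_smul (t : ℝ) (ht : 0 < t) (u : ℂ) (hu : ‖u‖ = 1) : cdir ((t : ℂ) * u) = u := by
  have : ‖(t : ℂ) * u‖ = t := by
    rw [norm_mul, hu, mul_one, Complex.norm_real, Real.norm_eq_abs, abs_of_pos ht]
  rw [cdir, this]
  rw [← mul_assoc, ← Complex.ofReal_inv, ← Complex.ofReal_mul, inv_mul_cancel₀ ht.ne']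
  simp

lemma self_eq_norm_smul_cdir {p : ℂ} (hp : p ≠ 0) : p = ((‖p‖ : ℝ) : ℂ) * cdir p := by
  rw [cdir, ← mul_assoc, ← Complex.ofReal_inv, ← Complex.ofReal_mul,
    mul_inv_cancel₀ (by simpa using hp)]
  simp

/-- The key lemma: a topological equivalence forces `k ≤ j`. -/
lemma key_le (j k : ℕ) (hj : 1 ≤ j) (hk : 1 ≤ k) (U V : Set ℂ)
    (hUo : IsOpen U) (hVo : IsOpen V) (h0U : (0 : ℂ) ∈ U) (h0V : (0 : ℂ) ∈ V)
    (h : U ≃ₜ V) (h' : ℝ ≃ₜ ℝ)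
    (hzero : (h ⟨0, h0U⟩ : ℂ) = 0)
    (heq : ∀ z : U, (((h z : ℂ)) ^ k).re = h' (((z : ℂ)) ^ j).re) : k ≤ j := by
  classical
  -- h' 0 = 0
  have hh'0 : h' 0 = 0 := by
    have := heq ⟨0, h0U⟩
    rw [hzero] at this
    simpa [zero_pow (by omega : j ≠ 0), zero_pow (by omega : k ≠ 0)] using this.symm
  have hzeroV : h ⟨0, h0U⟩ = (⟨0, h0V⟩ : V) := Subtype.ext hzero
  have hsymm0 : h.symm ⟨0, h0V⟩ = (⟨0, h0U⟩ : U) := by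
    rw [← hzeroV]; exact h.symm_apply_apply _
  -- choose r3 with ball ⊆ U
  obtain ⟨r3, hr3pos, hr3⟩ := Metric.isOpen_iff.mp hUo 0 h0U
  -- continuity of h.symm at 0
  have hcont : ContinuousAt (fun w : V => (h.symm w : ℂ)) ⟨0, h0V⟩ :=
    (continuous_subtype_val.comp h.symm.continuous).continuousAt
  rw [Metric.continuousAt_iff] at hcont
  obtain ⟨δ, hδpos, hδ⟩ := hcont r3 hr3pos
  obtain ⟨rV, hrVpos, hrV⟩ := Metric.isOpen_iff.mp hVo 0 h0V
  set r4 : ℝ := min δ rV with hr4def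
  have hr4pos : 0 < r4 := lt_min hδpos hrVpos
  set ε : ℝ := r4 / 2 with hεdef
  have hεpos : 0 < ε := by positivity
  -- the test points
  set q : ℕ → ℂ := fun m => (ε : ℂ) * wpt k m with hqdef
  have hr4leδ : r4 ≤ δ := min_le_left δ rV
  have hr4leV : r4 ≤ rV := min_le_right δ rV
  have hεlt : ε < r4 := by rw [hεdef]; linarith
  have hqnorm : ∀ m, ‖q m‖ = ε := by
    intro m
    show ‖(ε : ℂ) * wpt k m‖ = ε
    rw [norm_mul, Complex.norm_real, Real.norm_eq_abs, _root_.abs_of_pos hεpos,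
      wpt_norm, mul_one]
  have hqV : ∀ m, q m ∈ V := by
    intro m
    apply hrV
    rw [Metric.mem_ball, dist_zero_right, hqnorm m]
    linarith
  set p : ℕ → ℂ := fun m => (h.symm ⟨q m, hqV m⟩ : ℂ) with hpdef
  have hpball : ∀ m, p m ∈ Metric.ball (0 : ℂ) r3 := by
    intro m
    have hd : dist (⟨q m, hqV m⟩ : V) (⟨0, h0V⟩ : V) < δ := by
      rw [Subtype.dist_eq]
      rw [dist_zero_right, hqnorm m]
      linarith
    have := hδ hd
    rw [hsymm0] at this
    simpa [Metric.mem_ball, dist_eq_norm, hpdef] using this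
  have hpU : ∀ m, p m ∈ U := fun m => hr3 (hpball m)
  have hpmem : ∀ m, (h.symm ⟨q m, hqV m⟩ : U) = ⟨p m, hpU m⟩ := fun m => Subtype.ext rfl
  have hpne : ∀ m, p m ≠ 0 := by
    intro m hzero'
    have : (h.symm ⟨q m, hqV m⟩ : U) = (⟨0, h0U⟩ : U) := Subtype.ext hzero'
    rw [← hsymm0] at this
    have := h.symm.injective this
    have : q m = 0 := congrArg Subtype.val this
    rw [hqdef] at this
    simp only at this
    rcases mul_eq_zero.mp this with h1 | h1
    · exact (Complex.ofReal_ne_zero.mpr hεpos.ne') h1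
    · exact wpt_ne_zero k m h1
  have hqre : ∀ m, ((q m) ^ k).re = 0 := by
    intro m
    rw [hqdef]
    simp only [mul_pow, ← Complex.ofReal_pow, Complex.re_ofReal_mul, wpt_pow_re k m hk, mul_zero]
  have hpre : ∀ m, ((p m) ^ j).re = 0 := by
    intro m
    have h1 := heq (h.symm ⟨q m, hqV m⟩)
    rw [h.apply_symm_apply] at h1
    have h2 : h' (((p m) ^ j).re) = 0 := h1.symm.trans (hqre m)
    exact h'.injective (h2.trans hh'0.symm)
  -- the injection
  set F : ℕ → ℂ := fun m => cdir (p m) with hFdef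
  have hFmem : ∀ m ∈ (↑(Finset.range (2 * k)) : Set ℕ), F m ∈ {w : ℂ | w ^ (2 * j) = -1} := by
    intro m _
    exact dir_mem_roots hj (hpne m) (hpre m)
  have hFinj : Set.InjOn F (↑(Finset.range (2 * k)) : Set ℕ) := by
    intro m hm m' hm' hFeq
    simp only [Finset.coe_range, Set.mem_Iio] at hm hm'
    set u : ℂ := cdir (p m) with hudef
    have hu' : cdir (p m') = u := hFeq.symm
    have hunorm : ‖u‖ = 1 := cdir_norm (hpne m)
    have hpmu : p m = ((‖p m‖ : ℝ) : ℂ) * u := self_eq_norm_smul_cdir (hpne m)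
    have hpm'u : p m' = ((‖p m'‖ : ℝ) : ℂ) * u := by
      rw [← hu']; exact self_eq_norm_smul_cdir (hpne m')
    have hnm : (0 : ℝ) < ‖p m‖ := norm_pos_iff.mpr (hpne m)
    have hnm' : (0 : ℝ) < ‖p m'‖ := norm_pos_iff.mpr (hpne m')
    have hure : (u ^ j).re = 0 := by
      have h1 := hpre m
      rw [hpmu, mul_pow, ← Complex.ofReal_pow, Complex.re_ofReal_mul] at h1
      have h2 : (0 : ℝ) < ‖p m‖ ^ j := by positivity
      exact (mul_eq_zero.mp h1).elim (fun hh => absurd hh h2.ne') id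
    set C : Set ℂ := segment ℝ (p m) (p m') with hCdef
    have hCprecon : IsPreconnected C := (convex_segment _ _).isPreconnected
    have hCball : C ⊆ Metric.ball (0 : ℂ) r3 :=
      (convex_ball 0 r3).segment_subset (hpball m) (hpball m')
    have hCU : C ⊆ U := hCball.trans hr3
    have hCrep : ∀ x ∈ C, ∃ t : ℝ, 0 < t ∧ x = (t : ℂ) * u := by
      rintro x ⟨a, b, ha, hb, hab, rfl⟩
      refine ⟨a * ‖p m‖ + b * ‖p m'‖, ?_, ?_⟩
      · rcases ha.lt_or_eq with ha' | ha'
        · nlinarith [mul_pos ha' hnm, mul_nonneg hb hnm'.le]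
        · nlinarith [mul_pos (show (0:ℝ) < b by linarith) hnm', mul_nonneg ha hnm.le]
      · rw [Complex.real_smul, Complex.real_smul]
        conv_lhs => rw [hpmu, hpm'u]
        push_cast
        ring
    have hCZ : ∀ x ∈ C, x ≠ 0 ∧ (x ^ j).re = 0 := by
      intro x hx
      obtain ⟨t, ht, rfl⟩ := hCrep x hx
      constructor
      · apply mul_ne_zero
        · exact Complex.ofReal_ne_zero.mpr ht.ne'
        · intro hu0; rw [hu0] at hunorm; simp at hunorm
      · rw [mul_pow, ← Complex.ofReal_pow, Complex.re_ofReal_mul, hure, mul_zero]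
    -- transport to the target
    set C₀ : Set U := Subtype.val ⁻¹' C with hC0def
    have himg : Subtype.val '' C₀ = C := by
      rw [hC0def, Subtype.image_preimage_coe]
      exact Set.inter_eq_right.mpr hCU
    have hC0precon : IsPreconnected C₀ := by
      rw [← Topology.IsInducing.subtypeVal.isPreconnected_image, himg]
      exact hCprecon
    set D : Set ℂ := (fun z : U => (h z : ℂ)) '' C₀ with hDdef
    have hDprecon : IsPreconnected D :=
      hC0precon.image _ ((continuous_subtype_val.comp h.continuous).continuousOn)
    have hDprop : ∀ y ∈ D, y ≠ 0 ∧ (y ^ k).re = 0 := by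
      rintro _ ⟨z, hz, rfl⟩
      have hzC : (z : ℂ) ∈ C := hz
      constructor
      · intro h0
        have h1 : h z = (⟨0, h0V⟩ : V) := Subtype.ext h0
        have h2 : z = h.symm ⟨0, h0V⟩ := by rw [← h1, h.symm_apply_apply]
        rw [hsymm0] at h2
        have : (z : ℂ) = 0 := congrArg Subtype.val h2
        exact (hCZ _ hzC).1 this
      · rw [heq z, (hCZ _ hzC).2, hh'0]
    have hqmD : q m ∈ D := by
      refine ⟨h.symm ⟨q m, hqV m⟩, ?_, ?_⟩
      · exact left_mem_segment ℝ (p m) (p m')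
      · exact congrArg Subtype.val (h.apply_symm_apply ⟨q m, hqV m⟩)
    have hqm'D : q m' ∈ D := by
      refine ⟨h.symm ⟨q m', hqV m'⟩, ?_, ?_⟩
      · exact right_mem_segment ℝ (p m) (p m')
      · exact congrArg Subtype.val (h.apply_symm_apply ⟨q m', hqV m'⟩)
    have hdireq : cdir (q m) = cdir (q m') :=
      cdir_const_on_precon hk hDprecon hDprop hqmD hqm'D
    rw [hqdef] at hdireq
    simp only at hdireq
    rw [cdir_smul ε hεpos _ (wpt_norm k m), cdir_smul ε hεpos _ (wpt_norm k m')] at hdireq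
    exact wpt_inj k hk hm hm' hdireq
  have hcount := Set.ncard_le_ncard_of_injOn F hFmem hFinj (roots_finite j hj)
  rw [Set.ncard_coe_finset, Finset.card_range] at hcount
  have := roots_card j hj
  omega

/-- **Corollary to Theorem 1.** For integers `j, k ≥ 1`, the functions `z ↦ Re (z ^ j)`
and `z ↦ Re (z ^ k)` are topologically equivalent in neighborhoods of the critical
point `0` if and only if `j = k` (equivalently, iff the Poincaré indices `1 - j` and
`1 - k` coincide). -/
theorem re_zpow_locally_top_equiv_iff (j k : ℤ) (hj : 1 ≤ j) (hk : 1 ≤ k) :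
    j = k ↔ ∃ (U V : Set ℂ), IsOpen U ∧ IsOpen V ∧ (0 : ℂ) ∈ V ∧
      ∃ (h0U : (0 : ℂ) ∈ U) (h : U ≃ₜ V) (h' : ℝ ≃ₜ ℝ),
        (h ⟨0, h0U⟩ : ℂ) = 0 ∧
        ∀ z : U, (((h z : ℂ)) ^ k).re = h' (((z : ℂ)) ^ j).re := by
  constructor
  · rintro rfl
    exact ⟨Set.univ, Set.univ, isOpen_univ, isOpen_univ, Set.mem_univ _, Set.mem_univ _,
      Homeomorph.refl _, Homeomorph.refl _, rfl, fun z => rfl⟩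
  · rintro ⟨U, V, hUo, hVo, h0V, h0U, h, h', hzero, heq⟩
    lift j to ℕ using (by omega : (0 : ℤ) ≤ j) with jn
    lift k to ℕ using (by omega : (0 : ℤ) ≤ k) with kn
    have hjn : 1 ≤ jn := by exact_mod_cast hj
    have hkn : 1 ≤ kn := by exact_mod_cast hk
    have heq' : ∀ z : U, (((h z : ℂ)) ^ kn).re = h' (((z : ℂ)) ^ jn).re := by
      intro z
      have := heq z
      rwa [zpow_natCast, zpow_natCast] at this
    have hle1 : kn ≤ jn := key_le jn kn hjn hkn U V hUo hVo h0U h0V h h' hzero heq'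
    have hzeroV : h ⟨0, h0U⟩ = (⟨0, h0V⟩ : V) := Subtype.ext hzero
    have hsymm0 : (h.symm ⟨0, h0V⟩ : ℂ) = 0 := by
      rw [← hzeroV, h.symm_apply_apply]
    have heq2 : ∀ w : V, (((h.symm w : ℂ)) ^ jn).re = h'.symm (((w : ℂ)) ^ kn).re := by
      intro w
      have := heq' (h.symm w)
      rw [h.apply_symm_apply] at this
      rw [this, h'.symm_apply_apply]
    have hle2 : jn ≤ kn := key_le kn jn hkn hjn V U hVo hUo h0V h0U h.symm h'.symm hsymm0 heq2
    have : jn = kn := le_antisymm hle2 hle1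
    exact_mod_cast this
end

section
/- Let C = S¹ × [0, 1] be the cylinder and let H : C → C be a homeomorphism mapping S¹ × {0} onto S¹ × {0} and S¹ × {1} onto S¹ × {1}. Then there exists a homeomorphism H' : C → C that coincides with H on the boundary S¹ × {0, 1} and is level-preserving, i.e. the second coordinate of H'(x, t) equals t for all (x, t) ∈ C. -/
open Real Complex

private lemma circle_exp_sum {ι : Type*} (s : Finset ι) (f : ι → ℝ) :
    Circle.exp (∑ i ∈ s, f i) = ∏ i ∈ s, Circle.exp (f i) := by
  classical
  induction s using Finset.induction with
  | empty => simp
  | insert _ _ h ih => rw [Finset.sum_insert h, Finset.prod_insert h, Circle.exp_add, ih]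

private lemma circle_div_slit {z w : Circle} (h : dist z w < 2) :
    ((z / w : Circle) : ℂ) ∈ Complex.slitPlane := by
  by_contra hq
  rw [Complex.mem_slitPlane_iff] at hq
  push_neg at hq
  obtain ⟨hre, him⟩ := hq
  set q : ℂ := ((z / w : Circle) : ℂ) with hqdef
  have habs : ‖q‖ = 1 := Circle.norm_coe _
  have hq_eq : q = (q.re : ℂ) := by apply Complex.ext <;> simp [him]
  have : |q.re| = 1 := by rw [hq_eq] at habs; simpa using habs
  have hre1 : q.re = -1 := by
    rcases abs_eq (by norm_num : (0:ℝ) ≤ 1) |>.mp this with h' | h'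
    · linarith
    · exact h'
  have hqneg : q = -1 := by rw [hq_eq, hre1]; norm_num
  have hz : (z : ℂ) = -(w : ℂ) := by
    have hw : (w : ℂ) ≠ 0 := Circle.coe_ne_zero w
    have h' : (z : ℂ) / w = -1 := by rw [← Circle.coe_div, ← hqdef, hqneg]
    field_simp at h'
    exact h'
  have : dist z w = 2 := by
    rw [show dist z w = dist (z:ℂ) (w:ℂ) from rfl, Complex.dist_eq, hz]
    have h2 : -(w:ℂ) - w = -(2 * w) := by ring
    rw [h2]
    simp [Circle.norm_coe]
  linarith

private lemma min_abs_le (s x y : ℝ) : |min s x - min s y| ≤ |x - y| := by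
  rcases le_total s x with h1 | h1 <;> rcases le_total s y with h2 | h2 <;>
    rw [abs_le] <;>
    constructor <;>
    nlinarith [le_abs_self (x - y), neg_abs_le (x - y),
      min_eq_left h1, min_eq_right h1, min_eq_left h2, min_eq_right h2]

private lemma exists_lift (V : ℝ → unitInterval → Circle)
    (hV : Continuous fun p : ℝ × unitInterval => V p.1 p.2)
    (hper : ∀ t θ, V (θ + 2 * π) t = V θ t)
    (hzero : ∀ θ, V θ (0 : unitInterval) = 1) :
    ∃ d : Circle → ℝ, Continuous d ∧ ∀ θ, Circle.exp (d (Circle.exp θ)) = V θ 1 := by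
  have hπ := Real.two_pi_pos
  set K : Set (ℝ × unitInterval) := Set.Icc 0 (2 * π) ×ˢ Set.univ with hK
  have hKc : IsCompact K := isCompact_Icc.prod isCompact_univ
  have huc := hKc.uniformContinuousOn_of_continuous hV.continuousOn
  replace huc := Metric.uniformContinuousOn_iff.mp huc
  obtain ⟨δ, hδ, hucd⟩ := huc 2 two_pos
  obtain ⟨n, hn⟩ := exists_nat_gt (2 * π / δ)
  have hn0 : 0 < (n : ℝ) := lt_trans (by positivity) hn
  set h : ℝ := 2 * π / n with hh
  have hh0 : 0 < h := by positivity
  have hhδ : h < δ := by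
    rw [hh, div_lt_iff₀ hn0]
    have := (div_lt_iff₀ hδ).mp hn
    nlinarith
  have hnh : (n : ℝ) * h = 2 * π := by rw [hh]; field_simp
  have key : ∀ (t : unitInterval) (a b : ℝ), a ∈ Set.Icc 0 (2 * π) → b ∈ Set.Icc 0 (2 * π) →
      |a - b| ≤ h → ((V a t / V b t : Circle) : ℂ) ∈ Complex.slitPlane := by
    intro t a b ha hb hab
    apply circle_div_slit
    have haK : ((a, t) : ℝ × unitInterval) ∈ K := by rw [hK]; exact ⟨ha, Set.mem_univ _⟩
    have hbK : ((b, t) : ℝ × unitInterval) ∈ K := by rw [hK]; exact ⟨hb, Set.mem_univ _⟩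
    apply hucd (a, t) haK (b, t) hbK
    have hd : dist ((a,t) : ℝ × unitInterval) ((b,t) : ℝ × unitInterval) = |a - b| := by
      rw [Prod.dist_eq]
      simp only [dist_self, Real.dist_eq]
      exact max_eq_left (abs_nonneg _)
    rw [hd]
    exact lt_of_le_of_lt hab hhδ
  set A : unitInterval → ℝ → ℕ → ℝ := fun t s i =>
    Complex.arg ((V (min s ((i + 1) * h)) t / V (min s (i * h)) t : Circle) : ℂ) with hA
  set F : unitInterval → ℝ → ℝ := fun t s => ∑ i ∈ Finset.range n, A t s i with hF
  have grid_mem : ∀ (s : ℝ), s ∈ Set.Icc 0 (2 * π) → ∀ x : ℝ, 0 ≤ x →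
      min s x ∈ Set.Icc 0 (2 * π) := by
    intro s hs x hx
    exact ⟨le_min hs.1 hx, le_trans (min_le_left _ _) hs.2⟩
  have grid_close : ∀ (s : ℝ) (i : ℕ), |min s ((i + 1) * h) - min s (i * h)| ≤ h := by
    intro s i
    refine le_trans (min_abs_le s _ _) ?_
    have he : ((i:ℝ) + 1) * h - (i:ℝ) * h = h := by ring
    rw [he, _root_.abs_of_nonneg hh0.le]
  have exp_F : ∀ (t : unitInterval), ∀ s ∈ Set.Icc 0 (2 * π),
      Circle.exp (F t s) = V s t / V 0 t := by
    intro t s hs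
    rw [hF, circle_exp_sum]
    have : ∀ i ∈ Finset.range n, Circle.exp (A t s i)
        = V (min s ((i + 1) * h)) t / V (min s (i * h)) t := by
      intro i _
      rw [hA]
      exact Circle.exp_arg _
    rw [Finset.prod_congr rfl this]
    have hp := Finset.prod_range_div (fun i : ℕ => V (min s ((i : ℝ) * h)) t) n
    simp only [Nat.cast_add, Nat.cast_one] at hp ⊢
    rw [hp, hnh, min_eq_left hs.2]
    congr 2
    simp [min_eq_right hs.1]
  have F_zero : ∀ t, F t 0 = 0 := by
    intro t
    rw [hF]
    apply Finset.sum_eq_zero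
    intro i _
    rw [hA]
    have h1 : min (0:ℝ) (((i:ℝ) + 1) * h) = 0 := min_eq_left (by positivity)
    have h2 : min (0:ℝ) ((i:ℝ) * h) = 0 := min_eq_left (by positivity)
    simp only [h1, h2, div_self']
    simp
  set w : unitInterval → ℝ := fun t => F t (2 * π) with hw
  have h2π : (2 * π) ∈ Set.Icc (0:ℝ) (2 * π) := ⟨by positivity, le_refl _⟩
  have w_int : ∀ t, ∃ m : ℤ, w t = m * (2 * π) := by
    intro t
    have hexp : Circle.exp (w t) = 1 := by
      rw [hw]
      simp only
      rw [exp_F t _ h2π]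
      have hVp : V (2 * π) t = V 0 t := by
        have := hper t 0
        rwa [zero_add] at this
      rw [hVp, div_self']
    have : Circle.exp (w t) = Circle.exp 0 := by rw [hexp, Circle.exp_zero]
    obtain ⟨m, hm⟩ := Circle.exp_eq_exp.mp this
    exact ⟨m, by rw [hm]; ring⟩
  have cont_term : ∀ (a b : ℝ), a ∈ Set.Icc 0 (2 * π) → b ∈ Set.Icc 0 (2 * π) → |a - b| ≤ h →
      Continuous (fun t : unitInterval => Complex.arg ((V a t / V b t : Circle) : ℂ)) := by
    intro a b ha hb hab
    have hdiv : Continuous (fun t : unitInterval => V a t / V b t) :=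
      Continuous.div' (hV.comp (Continuous.prodMk_right a)) (hV.comp (Continuous.prodMk_right b))
    have hc : Continuous (fun t : unitInterval => ((V a t / V b t : Circle) : ℂ)) :=
      continuous_subtype_val.comp hdiv
    refine continuous_iff_continuousAt.mpr fun t => ?_
    have : ContinuousAt (Complex.arg ∘ (fun t : unitInterval => ((V a t / V b t : Circle) : ℂ))) t :=
      ContinuousAt.comp (Complex.continuousAt_arg (key t a b ha hb hab)) hc.continuousAt
    exact this
  have w_cont : Continuous w := by
    rw [hw]
    apply continuous_finset_sum
    intro i hi
    exact cont_term _ _ (grid_mem _ h2π _ (by positivity)) (grid_mem _ h2π _ (by positivity))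
      (grid_close _ i)
  have w_zero : w 0 = 0 := by
    rw [hw]
    simp only
    apply Finset.sum_eq_zero
    intro i _
    rw [hA]
    simp [hzero, div_self']
  have w_one : w 1 = 0 := by
    obtain ⟨m, hm⟩ := w_int 1
    set w' : ℝ → ℝ := fun τ => w (Set.projIcc 0 1 zero_le_one τ) with hw'
    have hw'c : Continuous w' := w_cont.comp continuous_projIcc
    have hw'0 : w' 0 = 0 := by rw [hw']; simp only [Set.projIcc_left]; exact w_zero
    have hw'1 : w' 1 = m * (2 * π) := by rw [hw']; simp only [Set.projIcc_right]; exact hm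
    have ivt := intermediate_value_uIcc (a := (0:ℝ)) (b := 1) hw'c.continuousOn
    rw [hw'0, hw'1] at ivt
    rcases lt_trichotomy m 0 with hm0 | hm0 | hm0
    · exfalso
      have hmem : -π ∈ Set.uIcc (0 : ℝ) (m * (2 * π)) := by
        rw [Set.mem_uIcc]
        right
        refine ⟨?_, by linarith [pi_pos]⟩
        have hm1 : m ≤ -1 := by omega
        have : (m : ℝ) ≤ -1 := by exact_mod_cast hm1
        nlinarith
      obtain ⟨τ, _, hτ⟩ := ivt hmem
      have hτ' : w (Set.projIcc 0 1 zero_le_one τ) = -π := hτ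
      obtain ⟨m', hm'⟩ := w_int (Set.projIcc 0 1 zero_le_one τ)
      rw [hm'] at hτ'
      have h2 : π * (2 * (m' : ℝ)) = π * (-1) := by linear_combination hτ'
      have h3 : (2 : ℝ) * m' = -1 := by
        have := mul_left_cancel₀ pi_ne_zero h2
        linarith
      have h4 : (2 : ℤ) * m' = -1 := by exact_mod_cast h3
      omega
    · rw [hm, hm0]; simp
    · exfalso
      have hmem : π ∈ Set.uIcc (0 : ℝ) (m * (2 * π)) := by
        rw [Set.mem_uIcc]
        left
        refine ⟨by linarith [pi_pos], ?_⟩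
        have hm1 : 1 ≤ m := by omega
        have : (1 : ℝ) ≤ (m : ℝ) := by exact_mod_cast hm1
        nlinarith
      obtain ⟨τ, _, hτ⟩ := ivt hmem
      have hτ' : w (Set.projIcc 0 1 zero_le_one τ) = π := hτ
      obtain ⟨m', hm'⟩ := w_int (Set.projIcc 0 1 zero_le_one τ)
      rw [hm'] at hτ'
      have h2 : π * (2 * (m' : ℝ)) = π * 1 := by linear_combination hτ'
      have h3 : (2 : ℝ) * m' = 1 := by
        have := mul_left_cancel₀ pi_ne_zero h2
        linarith
      have h4 : (2 : ℤ) * m' = 1 := by exact_mod_cast h3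
      omega
  set L : ℝ → ℝ := fun s => Complex.arg ((V 0 1 : Circle) : ℂ) + F 1 s with hL
  have hLper : L 0 = L (0 + 2 * π) := by
    rw [hL]
    simp only [zero_add]
    rw [F_zero]
    have hF2π : F 1 (2 * π) = 0 := w_one
    rw [hF2π]
  have hLcont : ContinuousOn L (Set.Icc 0 (0 + 2 * π)) := by
    rw [zero_add]
    apply ContinuousOn.add continuousOn_const
    apply continuousOn_finset_sum
    intro i hi
    intro s hs
    have hc1 : Continuous (fun s' : ℝ => V (min s' (((i:ℝ) + 1) * h)) 1) :=
      (hV.comp (continuous_id.prodMk continuous_const)).comp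
        (continuous_id.min continuous_const)
    have hc2 : Continuous (fun s' : ℝ => V (min s' ((i:ℝ) * h)) 1) :=
      (hV.comp (continuous_id.prodMk continuous_const)).comp
        (continuous_id.min continuous_const)
    have hdiv : Continuous (fun s' : ℝ =>
        V (min s' (((i:ℝ) + 1) * h)) 1 / V (min s' ((i:ℝ) * h)) 1) := hc1.div' hc2
    have hc : Continuous (fun s' : ℝ =>
        ((V (min s' (((i:ℝ) + 1) * h)) 1 / V (min s' ((i:ℝ) * h)) 1 : Circle) : ℂ)) :=
      continuous_subtype_val.comp hdiv
    apply ContinuousAt.continuousWithinAt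
    have : ContinuousAt (Complex.arg ∘ (fun s' : ℝ =>
        ((V (min s' (((i:ℝ) + 1) * h)) 1 / V (min s' ((i:ℝ) * h)) 1 : Circle) : ℂ))) s :=
      ContinuousAt.comp (Complex.continuousAt_arg (key 1 _ _ (grid_mem _ hs _ (by positivity))
        (grid_mem _ hs _ (by positivity)) (grid_close _ i))) hc.continuousAt
    exact this
  haveI : Fact (0 < 2 * π) := ⟨hπ⟩
  set d : Circle → ℝ := (AddCircle.liftIco (2 * π) 0 L) ∘
    (AddCircle.homeomorphCircle'.symm) with hd
  have hdcont : Continuous d :=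
    (AddCircle.liftIco_continuous hLper hLcont).comp AddCircle.homeomorphCircle'.symm.continuous
  have hd_Ico : ∀ θ ∈ Set.Ico (0:ℝ) (2 * π), Circle.exp (d (Circle.exp θ)) = V θ 1 := by
    intro θ hθ
    have h1 : AddCircle.homeomorphCircle'.symm (Circle.exp θ) = (θ : AddCircle (2 * π)) := by
      rw [← AddCircle.homeomorphCircle'_apply_mk θ]
      exact AddCircle.homeomorphCircle'.symm_apply_apply _
    have h2 : d (Circle.exp θ) = L θ := by
      rw [hd]
      simp only [Function.comp_apply, h1]
      exact AddCircle.liftIco_coe_apply (by rwa [zero_add])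
    rw [h2, hL]
    simp only
    rw [Circle.exp_add, exp_F 1 θ ⟨hθ.1, le_of_lt hθ.2⟩, Circle.exp_arg]
    exact mul_div_cancel _ _
  refine ⟨d, hdcont, fun θ => ?_⟩
  set θ₀ := toIcoMod hπ 0 θ with hθ₀
  have hmem : θ₀ ∈ Set.Ico (0:ℝ) (2 * π) := by
    have := toIcoMod_mem_Ico hπ 0 θ
    rwa [zero_add] at this
  have hsub : θ - θ₀ = toIcoDiv hπ 0 θ • (2 * π) := self_sub_toIcoMod hπ 0 θ
  set m := toIcoDiv hπ 0 θ
  have hθeq : θ = θ₀ + (m : ℝ) * (2 * π) := by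
    rw [zsmul_eq_mul] at hsub
    linarith
  have hexp : Circle.exp θ = Circle.exp θ₀ := Circle.exp_eq_exp.mpr ⟨m, hθeq⟩
  have hVper : V θ 1 = V θ₀ 1 := by
    have hp : Function.Periodic (fun θ' => V θ' 1) (2 * π) := fun x => hper 1 x
    have hpm := (hp.int_mul m) θ₀
    rw [← hθeq] at hpm
    exact hpm
  rw [hexp, hVper]
  exact hd_Ico θ₀ hmem

/-- A homeomorphism of the cylinder `S¹ × [0, 1]` preserving each boundary circle can
be replaced by a level-preserving homeomorphism coinciding with it on the boundary. -/
theorem cylinder_homeo_boundary_rel_level_preserving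
    (H : Circle × unitInterval ≃ₜ Circle × unitInterval)
    (h0 : H '' {p : Circle × unitInterval | p.2 = 0} = {p | p.2 = 0})
    (h1 : H '' {p : Circle × unitInterval | p.2 = 1} = {p | p.2 = 1}) :
    ∃ H' : Circle × unitInterval ≃ₜ Circle × unitInterval,
      (∀ p : Circle × unitInterval, p.2 = 0 ∨ p.2 = 1 → H' p = H p) ∧
      (∀ p : Circle × unitInterval, (H' p).2 = p.2) := by
  have hπ := Real.two_pi_pos
  -- boundary behaviour of H and H.symm
  have hH0 : ∀ x : Circle, (H (x, 0)).2 = 0 := by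
    intro x
    have hx : H (x, 0) ∈ {p : Circle × unitInterval | p.2 = 0} := by
      rw [← h0]; exact ⟨(x, 0), rfl, rfl⟩
    exact hx
  have hH1 : ∀ x : Circle, (H (x, 1)).2 = 1 := by
    intro x
    have hx : H (x, 1) ∈ {p : Circle × unitInterval | p.2 = 1} := by
      rw [← h1]; exact ⟨(x, 1), rfl, rfl⟩
    exact hx
  have hH0' : ∀ x : Circle, (H.symm (x, 0)).2 = 0 := by
    intro x
    have hx : ((x, 0) : Circle × unitInterval) ∈ H '' {p | p.2 = 0} := by rw [h0]; exact rfl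
    obtain ⟨q, hq, hq2⟩ := hx
    have : H.symm (x, 0) = q := by rw [← hq2]; exact H.symm_apply_apply q
    rw [this]; exact hq
  have hH1' : ∀ x : Circle, (H.symm (x, 1)).2 = 1 := by
    intro x
    have hx : ((x, 1) : Circle × unitInterval) ∈ H '' {p | p.2 = 1} := by rw [h1]; exact rfl
    obtain ⟨q, hq, hq2⟩ := hx
    have : H.symm (x, 1) = q := by rw [← hq2]; exact H.symm_apply_apply q
    rw [this]; exact hq
  -- the boundary homeomorphisms
  let f0 : Circle ≃ₜ Circle :=
    { toFun := fun x => (H (x, 0)).1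
      invFun := fun x => (H.symm (x, 0)).1
      left_inv := by
        intro x
        show (H.symm ((H (x, 0)).1, 0)).1 = x
        have he : (((H (x, 0)).1, (0 : unitInterval)) : Circle × unitInterval) = H (x, 0) :=
          Prod.ext rfl (hH0 x).symm
        rw [he, H.symm_apply_apply]
      right_inv := by
        intro x
        show (H ((H.symm (x, 0)).1, 0)).1 = x
        have he : (((H.symm (x, 0)).1, (0 : unitInterval)) : Circle × unitInterval)
            = H.symm (x, 0) := Prod.ext rfl (hH0' x).symm
        rw [he, H.apply_symm_apply]
      continuous_toFun :=
        continuous_fst.comp (H.continuous.comp (continuous_id.prodMk continuous_const))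
      continuous_invFun :=
        continuous_fst.comp (H.symm.continuous.comp (continuous_id.prodMk continuous_const)) }
  let f1 : Circle ≃ₜ Circle :=
    { toFun := fun x => (H (x, 1)).1
      invFun := fun x => (H.symm (x, 1)).1
      left_inv := by
        intro x
        show (H.symm ((H (x, 1)).1, 1)).1 = x
        have he : (((H (x, 1)).1, (1 : unitInterval)) : Circle × unitInterval) = H (x, 1) :=
          Prod.ext rfl (hH1 x).symm
        rw [he, H.symm_apply_apply]
      right_inv := by
        intro x
        show (H ((H.symm (x, 1)).1, 1)).1 = x
        have he : (((H.symm (x, 1)).1, (1 : unitInterval)) : Circle × unitInterval)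
            = H.symm (x, 1) := Prod.ext rfl (hH1' x).symm
        rw [he, H.apply_symm_apply]
      continuous_toFun :=
        continuous_fst.comp (H.continuous.comp (continuous_id.prodMk continuous_const))
      continuous_invFun :=
        continuous_fst.comp (H.symm.continuous.comp (continuous_id.prodMk continuous_const)) }
  have hf0 : ∀ x, f0 x = (H (x, 0)).1 := fun _ => rfl
  have hf1 : ∀ x, f1 x = (H (x, 1)).1 := fun _ => rfl
  -- the homotopy
  set V : ℝ → unitInterval → Circle :=
    fun θ t => (Circle.exp θ)⁻¹ * f0.symm ((H (Circle.exp θ, t)).1) with hVdef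
  have hexpc : Continuous (fun p : ℝ × unitInterval => Circle.exp p.1) :=
    Circle.exp.continuous.comp continuous_fst
  have hV : Continuous fun p : ℝ × unitInterval => V p.1 p.2 := by
    apply Continuous.mul
    · exact hexpc.inv
    · exact f0.symm.continuous.comp (continuous_fst.comp
        (H.continuous.comp (hexpc.prodMk continuous_snd)))
  have hper : ∀ t θ, V (θ + 2 * Real.pi) t = V θ t := by
    intro t θ
    rw [hVdef]
    simp only [Circle.periodic_exp θ]
  have hzero : ∀ θ, V θ (0 : unitInterval) = 1 := by
    intro θ
    rw [hVdef]
    simp only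
    rw [← hf0 (Circle.exp θ), f0.symm_apply_apply, inv_mul_cancel]
  obtain ⟨d, hdcont, hd1⟩ := exists_lift V hV hper hzero
  have hdx : ∀ x : Circle, x * Circle.exp (d x) = f0.symm (f1 x) := by
    intro x
    have hx : Circle.exp ((x : ℂ).arg) = x := Circle.exp_arg x
    have hh := hd1 ((x : ℂ).arg)
    rw [hx] at hh
    rw [hh, hVdef]
    simp only [hx]
    rw [mul_inv_cancel_left]
    rfl
  -- the lifted boundary correction and its properties
  set G : ℝ → ℝ := fun θ => θ + d (Circle.exp θ) with hGdef
  have hGexp : ∀ θ, Circle.exp (G θ) = f0.symm (f1 (Circle.exp θ)) := by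
    intro θ
    rw [hGdef]
    simp only
    rw [Circle.exp_add]
    exact hdx (Circle.exp θ)
  have hGperZ : ∀ (θ : ℝ) (m : ℤ), G (θ + m * (2 * Real.pi)) = G θ + m * (2 * Real.pi) := by
    intro θ m
    rw [hGdef]
    simp only
    have he : Circle.exp (θ + m * (2 * Real.pi)) = Circle.exp θ :=
      Circle.exp_eq_exp.mpr ⟨m, rfl⟩
    rw [he]
    ring
  have hGcont : Continuous G := continuous_id.add (hdcont.comp Circle.exp.continuous)
  have hGinj : Function.Injective G := by
    intro a b hab
    have h2 : f0.symm (f1 (Circle.exp a)) = f0.symm (f1 (Circle.exp b)) := by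
      rw [← hGexp, ← hGexp, hab]
    have h3 : Circle.exp a = Circle.exp b :=
      f1.injective (f0.symm.injective h2)
    obtain ⟨m, hm⟩ := Circle.exp_eq_exp.mp h3
    have h4 := hGperZ b m
    rw [← hm] at h4
    rw [hab] at h4
    have h5 : (m : ℝ) * (2 * Real.pi) = 0 := by linarith
    have h6 : (m : ℝ) = 0 := by
      rcases mul_eq_zero.mp h5 with h | h
      · exact h
      · linarith
    have h7 : m = 0 := by exact_mod_cast h6
    rw [hm, h7]
    simp
  have hGmono : StrictMono G := by
    rcases hGcont.strictMono_of_inj hGinj with hm | hm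
    · exact hm
    · exfalso
      have h2 : G (0 + 1 * (2 * Real.pi)) = G 0 + 1 * (2 * Real.pi) := by
        have := hGperZ 0 1
        exact_mod_cast this
      have h3 : G (0 + 1 * (2 * Real.pi)) < G 0 := hm (by linarith)
      linarith
  -- the level-wise interpolation
  have hΦmono : ∀ t : unitInterval, StrictMono (fun θ : ℝ => θ + (t : ℝ) * d (Circle.exp θ)) := by
    intro t a b hab
    have hGab := hGmono hab
    rw [hGdef] at hGab
    simp only at hGab ⊢
    rcases eq_or_lt_of_le t.2.1 with ht | ht
    · rw [← ht]
      simpa using hab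
    · have h2 : (t : ℝ) * (a + d (Circle.exp a)) < (t : ℝ) * (b + d (Circle.exp b)) :=
        mul_lt_mul_of_pos_left hGab ht
      have h3 : (1 - (t : ℝ)) * a ≤ (1 - (t : ℝ)) * b :=
        mul_le_mul_of_nonneg_left hab.le (by linarith [t.2.2])
      nlinarith
  have hΦperZ : ∀ (t : unitInterval) (θ : ℝ) (m : ℤ),
      (θ + m * (2 * Real.pi)) + (t : ℝ) * d (Circle.exp (θ + m * (2 * Real.pi)))
        = (θ + (t : ℝ) * d (Circle.exp θ)) + m * (2 * Real.pi) := by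
    intro t θ m
    have he : Circle.exp (θ + m * (2 * Real.pi)) = Circle.exp θ :=
      Circle.exp_eq_exp.mpr ⟨m, rfl⟩
    rw [he]
    ring
  obtain ⟨M, hM⟩ : ∃ M : ℝ, ∀ x : Circle, |d x| ≤ M := by
    obtain ⟨C, hC⟩ := isCompact_univ.exists_bound_of_continuousOn hdcont.continuousOn
    exact ⟨C, fun x => by simpa [Real.norm_eq_abs] using hC x (Set.mem_univ x)⟩
  have hΦsurj : ∀ t : unitInterval,
      Function.Surjective (fun θ : ℝ => θ + (t : ℝ) * d (Circle.exp θ)) := by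
    intro t
    have hcont : Continuous (fun θ : ℝ => θ + (t : ℝ) * d (Circle.exp θ)) :=
      continuous_id.add (continuous_const.mul (hdcont.comp Circle.exp.continuous))
    have hbd : ∀ θ : ℝ, |(t : ℝ) * d (Circle.exp θ)| ≤ M := by
      intro θ
      rw [abs_mul]
      calc |(t : ℝ)| * |d (Circle.exp θ)| ≤ 1 * M := by
            apply mul_le_mul
            · rw [_root_.abs_of_nonneg t.2.1]; exact t.2.2
            · exact hM _
            · exact abs_nonneg _
            · norm_num
      _ = M := one_mul M
    apply hcont.surjective
    · apply Filter.tendsto_atTop_mono (fun θ : ℝ => ?_)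
        (Filter.tendsto_atTop_add_const_right _ (-M) Filter.tendsto_id)
      have hb := abs_le.mp (hbd θ)
      simp only [id]
      linarith [hb.1]
    · apply Filter.tendsto_atBot_mono (fun θ : ℝ => ?_)
        (Filter.tendsto_atBot_add_const_right _ M Filter.tendsto_id)
      have hb := abs_le.mp (hbd θ)
      simp only [id]
      linarith [hb.2]
  -- the level-preserving map
  set k : Circle × unitInterval → Circle × unitInterval :=
    fun p => (f0 (p.1 * Circle.exp ((p.2 : ℝ) * d p.1)), p.2) with hkdef
  have hkey : ∀ (θ : ℝ) (t : unitInterval),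
      Circle.exp θ * Circle.exp ((t : ℝ) * d (Circle.exp θ))
        = Circle.exp (θ + (t : ℝ) * d (Circle.exp θ)) := by
    intro θ t
    rw [Circle.exp_add]
  have hkinj : Function.Injective k := by
    rintro ⟨x, t⟩ ⟨y, s⟩ hxy
    rw [hkdef] at hxy
    simp only [Prod.mk.injEq] at hxy
    obtain ⟨hxy1, hts⟩ := hxy
    subst hts
    have h2 : x * Circle.exp ((t : ℝ) * d x) = y * Circle.exp ((t : ℝ) * d y) :=
      f0.injective hxy1
    have hx : Circle.exp ((x : ℂ).arg) = x := Circle.exp_arg x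
    have hy : Circle.exp ((y : ℂ).arg) = y := Circle.exp_arg y
    set a := (x : ℂ).arg
    set b := (y : ℂ).arg
    rw [← hx, ← hy] at h2
    rw [hkey, hkey] at h2
    obtain ⟨m, hm⟩ := Circle.exp_eq_exp.mp h2
    have h3 := hΦperZ t b m
    rw [← hm] at h3
    have h4 : a + (t : ℝ) * d (Circle.exp a) = (b + m * (2 * Real.pi))
        + (t : ℝ) * d (Circle.exp (b + m * (2 * Real.pi))) := by
      rw [h3, hm]
    have h5 : a = b + m * (2 * Real.pi) := hΦmono t |>.injective h4
    have h6 : Circle.exp a = Circle.exp b := Circle.exp_eq_exp.mpr ⟨m, h5⟩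
    have h7 : x = y := by rw [← hx, ← hy, h6]
    rw [h7]
  have hksurj : Function.Surjective k := by
    rintro ⟨y, t⟩
    set ψ := ((f0.symm y : Circle) : ℂ).arg with hψ
    have hψe : Circle.exp ψ = f0.symm y := Circle.exp_arg _
    obtain ⟨θ, hθ⟩ := hΦsurj t ψ
    refine ⟨(Circle.exp θ, t), ?_⟩
    have hθ' : θ + (t : ℝ) * d (Circle.exp θ) = ψ := hθ
    rw [hkdef]
    show (f0 (Circle.exp θ * Circle.exp ((t : ℝ) * d (Circle.exp θ))), t) = (y, t)
    rw [hkey, hθ', hψe, f0.apply_symm_apply]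
  have hkcont : Continuous k := by
    rw [hkdef]
    apply Continuous.prodMk
    · apply f0.continuous.comp
      apply Continuous.mul continuous_fst
      apply Circle.exp.continuous.comp
      exact (continuous_subtype_val.comp continuous_snd).mul (hdcont.comp continuous_fst)
    · exact continuous_snd
  let E : Circle × unitInterval ≃ Circle × unitInterval := Equiv.ofBijective k ⟨hkinj, hksurj⟩
  let H' : Circle × unitInterval ≃ₜ Circle × unitInterval :=
    Continuous.homeoOfEquivCompactToT2 (f := E) hkcont
  have hH'app : ∀ p, H' p = k p := fun _ => rfl
  refine ⟨H', ?_, ?_⟩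
  · rintro ⟨x, t⟩ hp
    rcases hp with ht | ht
    · have ht' : t = 0 := ht
      subst ht'
      rw [hH'app, hkdef]
      simp only
      have hc0 : ((0 : unitInterval) : ℝ) = 0 := rfl
      rw [hc0, zero_mul, Circle.exp_zero, mul_one]
      exact Prod.ext (hf0 x) (hH0 x).symm
    · have ht' : t = 1 := ht
      subst ht'
      rw [hH'app, hkdef]
      simp only
      have hc1 : ((1 : unitInterval) : ℝ) = 1 := rfl
      rw [hc1, one_mul, hdx x, f0.apply_symm_apply]
      exact Prod.ext (hf1 x) (hH1 x).symm
  · intro p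
    rw [hH'app, hkdef]
end
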